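/- Let θ(z) = Σ_{n ∈ ℤ} e^{2πi n² z} for z in the complex upper half-plane. Then for every matrix [[a,b],[c,d]] ∈ SL(2,ℤ) with c ≡ 0 (mod 4) and every z in the upper half-plane, θ((az+b)/(cz+d))⁴ = (cz+d)² θ(z)⁴; that is, θ⁴ is a modular form of weight 2 for the congruence subgroup Γ₀(4). -/

import Mathlib

/-!
Mathlib's `jacobiTheta τ = ∑ exp(π i n² τ)` satisfies `jacobiTheta (-1/τ) = (-iτ)^(1/2) jacobiTheta τ`,
and `θ z = jacobiTheta (2z)`. Hence `θ⁴` is `1`-periodic and, under the weight-2 slash action of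
the Fricke involution `W₄ = [[0,-1],[4,0]]`, satisfies `θ⁴ ∣ W₄ = -θ⁴`. As
`V₄ W₄ T = W₄` for `V₄ = [[1,0],[4,1]]`, the function `θ⁴` is invariant under `T` and `V₄`, and under
`-1` because the weight is even. These three matrices generate `Γ₀(4)`: left multiplication by
powers of `T` and of `V₄` reduces `|c|` (a Euclidean algorithm on the first column, which works
because `a` is odd while `4 ∣ c`) until `c = 0`, where only `±Tⁿ` remain.
-/

/-- The Jacobi theta function θ(z) = Σ_{n ∈ ℤ} e^{2πi n² z} on the upper half-plane. -/
noncomputable def jacobiThetaFn (z : ℂ) : ℂ :=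
  ∑' n : ℤ, Complex.exp (2 * Real.pi * Complex.I * (n : ℂ) ^ 2 * z)

open UpperHalfPlane ModularGroup ModularForm CongruenceSubgroup Matrix
open scoped MatrixGroups

lemma jacobiThetaFn_eq_jacobiTheta (z : ℂ) : jacobiThetaFn z = jacobiTheta (2 * z) :=
  tsum_congr fun n ↦ by ring_nf

lemma jacobiThetaFn_add_one (z : ℂ) : jacobiThetaFn (z + 1) = jacobiThetaFn z := by
  rw [jacobiThetaFn_eq_jacobiTheta, jacobiThetaFn_eq_jacobiTheta, mul_add, mul_one, add_comm,
    jacobiTheta_two_add]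

lemma jacobiThetaFn_neg_one_div_four_mul_pow_four {z : ℂ} (hz : 0 < z.im) :
    jacobiThetaFn (-1 / (4 * z)) ^ 4 = -4 * z ^ 2 * jacobiThetaFn z ^ 4 := by
  have h := jacobiTheta_S_smul ⟨2 * z, by simpa using hz⟩
  rw [modular_S_smul] at h
  have hpow : ((-Complex.I * (2 * z)) ^ ((1 : ℂ) / 2)) ^ 4 = -4 * z ^ 2 := by
    rw [← Complex.cpow_nat_mul, show ((4 : ℕ) : ℂ) * (1 / 2) = (2 : ℕ) by norm_num,
      Complex.cpow_natCast, mul_pow, neg_pow, Complex.I_sq]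
    ring
  have hz0 : z ≠ 0 := fun h ↦ by simp [h] at hz
  rw [jacobiThetaFn_eq_jacobiTheta, jacobiThetaFn_eq_jacobiTheta,
    show 2 * (-1 / (4 * z)) = (-(2 * z))⁻¹ by field_simp; ring]
  exact (congrArg (· ^ 4) h).trans (by rw [mul_pow, hpow])

noncomputable def jacobiThetaFnPowFour (τ : ℍ) : ℂ := jacobiThetaFn τ ^ 4

noncomputable def frickeFour : GL (Fin 2) ℝ :=
  GeneralLinearGroup.mkOfDetNeZero !![0, -1; 4, 0] (by norm_num [det_fin_two_of])

lemma jacobiThetaFnPowFour_slash_frickeFour :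
    jacobiThetaFnPowFour ∣[(2 : ℤ)] frickeFour = -jacobiThetaFnPowFour := by
  have hdet : (frickeFour.det : ℝ) = 4 := by
    simp [frickeFour, GeneralLinearGroup.val_det_apply, det_fin_two_of]
  ext τ
  have hdenom : denom frickeFour τ = 4 * τ := by simp [denom, frickeFour]
  have hsmul : ((frickeFour • τ : ℍ) : ℂ) = -1 / (4 * τ) := by
    rw [coe_smul_of_det_pos (by rw [hdet]; norm_num), hdenom]
    simp [num, frickeFour]
  rw [slash_apply, σ, if_pos (by rw [hdet]; norm_num), ContinuousAlgEquiv.refl_apply,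
    jacobiThetaFnPowFour, hsmul, jacobiThetaFn_neg_one_div_four_mul_pow_four τ.im_pos, hdet,
    hdenom, Pi.neg_apply, jacobiThetaFnPowFour]
  field_simp [τ.ne_zero]
  norm_num
  ring

def slashStabilizer {β G α : Type*} [Group G] [AddMonoid α] [SlashAction β G α] (k : β) (f : α) :
    Subgroup G where
  carrier := {γ | f ∣[k] γ = f}
  one_mem' := SlashAction.slash_one k f
  mul_mem' {g h} (hg : f ∣[k] g = f) (hh : f ∣[k] h = f) := by
    rw [Set.mem_ofPred_eq, SlashAction.slash_mul, hg, hh]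
  inv_mem' {g} (hg : f ∣[k] g = f) := by
    rw [Set.mem_ofPred_eq]
    conv_lhs => rw [← hg, ← SlashAction.slash_mul, mul_inv_cancel, SlashAction.slash_one]

lemma SlashAction.slash_left_injective {β G α : Type*} [Group G] [AddMonoid α]
    [SlashAction β G α] (k : β) (g : G) : Function.Injective (fun f : α ↦ f ∣[k] g) :=
  fun f f' h ↦ by simpa [← SlashAction.slash_mul] using congrArg (· ∣[k] g⁻¹) h

lemma neg_one_mem_slashStabilizer {k : ℤ} (hk : Even k) (f : ℍ → ℂ) :
    (-1 : SL(2, ℤ)) ∈ slashStabilizer k f := by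
  ext τ
  rw [SL_slash_apply, SL_neg_smul, one_smul]
  simp [denom, hk.neg_one_zpow]

lemma Int.exists_two_mul_natAbs_add_mul_le (x : ℤ) {m : ℤ} (hm : m ≠ 0) :
    ∃ n : ℤ, 2 * (x + n * m).natAbs ≤ m.natAbs := by
  have hpos : 0 < m.natAbs := Int.natAbs_pos.mpr hm
  have hlo := Int.le_bmod (x := x) hpos
  have hhi := Int.bmod_lt (x := x) hpos
  obtain ⟨q, hq⟩ := Int.dvd_bmod_sub_self (x := x) (m := m.natAbs)
  refine ⟨q * m.sign, ?_⟩
  rw [mul_assoc, Int.sign_mul_self, show x + q * m.natAbs = x.bmod m.natAbs by linarith]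
  omega

def V₄ : SL(2, ℤ) := ⟨!![1, 0; 4, 1], by simp [det_fin_two_of]⟩

@[simp]
lemma coe_V₄ : (V₄ : Matrix (Fin 2) (Fin 2) ℤ) = !![1, 0; 4, 1] := rfl

lemma V₄_zpow_mul_apply_one_zero (m : ℤ) (g : SL(2, ℤ)) :
    (V₄ ^ m * g) 1 0 = g 1 0 + 4 * m * g 0 0 := by
  induction m generalizing g with
  | zero => simp
  | succ n ih =>
    rw [_root_.zpow_add_one, mul_assoc, ih]
    simp [mul_apply, Fin.sum_univ_two]
    ring
  | pred n ih =>
    rw [_root_.zpow_sub_one, mul_assoc, ih]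
    simp [mul_apply, Fin.sum_univ_two, adjugate_fin_two]
    ring

lemma T_zpow_mul_apply_zero_zero (n : ℤ) (g : SL(2, ℤ)) :
    (T ^ n * g) 0 0 = g 0 0 + n * g 1 0 := by
  simp [coe_T_zpow, mul_apply, Fin.sum_univ_two]

lemma exists_natAbs_V₄_zpow_T_zpow_mul_lt {g : SL(2, ℤ)} (hg : g ∈ Gamma0 4) (hc : g 1 0 ≠ 0) :
    ∃ m n : ℤ, ((V₄ ^ m * T ^ n * g) 1 0).natAbs < (g 1 0).natAbs := by
  obtain ⟨k, hk⟩ : 4 ∣ g 1 0 := (ZMod.intCast_zmod_eq_zero_iff_dvd _ 4).mp (Gamma0_mem.mp hg)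
  have hdet : g 0 0 * g 1 1 - g 0 1 * g 1 0 = 1 := by
    have := g.det_coe
    rwa [det_fin_two] at this
  obtain ⟨n, hn⟩ := Int.exists_two_mul_natAbs_add_mul_le (g 0 0) hc
  set a := g 0 0 + n * g 1 0 with ha
  -- `a` is odd while `4 ∣ g 1 0`, so `2 * |a| ≤ |g 1 0|` is strict and `a ≠ 0`.
  have had : Odd (a * g 1 1) :=
    ⟨2 * k * (g 0 1 + n * g 1 1), by linear_combination hdet + (g 0 1 + n * g 1 1) * hk⟩
  have hodd : a % 2 = 1 := Int.odd_iff.mp (Int.odd_mul.mp had).1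
  obtain ⟨m, hm⟩ := Int.exists_two_mul_natAbs_add_mul_le (g 1 0) (m := 4 * a) (by omega)
  refine ⟨m, n, ?_⟩
  rw [mul_assoc, V₄_zpow_mul_apply_one_zero, T_zpow_mul_apply_zero_zero, T_pow_mul_apply_one, ← ha,
    show g 1 0 + 4 * m * a = g 1 0 + m * (4 * a) by ring]
  omega

lemma exists_eq_T_zpow_or_eq_neg_T_zpow_of_c_eq_zero {g : SL(2, ℤ)} (hc : g 1 0 = 0) :
    ∃ n : ℤ, g = T ^ n ∨ g = -T ^ n := by
  have had : g 0 0 * g 1 1 = 1 := by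
    have := g.det_coe
    rwa [det_fin_two, hc, mul_zero, sub_zero] at this
  rcases Int.eq_one_or_neg_one_of_mul_eq_one' had with ⟨ha, hd⟩ | ⟨ha, hd⟩
  · refine ⟨g 0 1, Or.inl ?_⟩
    ext i j
    fin_cases i <;> fin_cases j <;> simp [ha, hc, hd, coe_T_zpow]
  · refine ⟨-g 0 1, Or.inr ?_⟩
    ext i j
    fin_cases i <;> fin_cases j <;> simp [ha, hc, hd, coe_T_zpow]

lemma Gamma0_four_le_of_mem {H : Subgroup SL(2, ℤ)} (hneg : -1 ∈ H) (hT : T ∈ H) (hV : V₄ ∈ H) :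
    Gamma0 4 ≤ H := by
  intro g hg
  induction hk : (g 1 0).natAbs using Nat.strong_induction_on generalizing g with
  | _ k ih =>
  rcases eq_or_ne (g 1 0) 0 with hc | hc
  · obtain ⟨n, rfl | rfl⟩ := exists_eq_T_zpow_or_eq_neg_T_zpow_of_c_eq_zero hc
    · exact H.zpow_mem hT n
    · simpa using H.mul_mem hneg (H.zpow_mem hT n)
  · obtain ⟨m, n, hlt⟩ := exists_natAbs_V₄_zpow_T_zpow_mul_lt hg hc
    have hVT : V₄ ^ m * T ^ n ∈ Gamma0 4 :=
      mul_mem (zpow_mem (Gamma0_mem.mpr (by simp; rfl)) m) (zpow_mem (Gamma0_mem.mpr (by simp)) n)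
    refine (H.mul_mem_cancel_left (H.mul_mem (H.zpow_mem hV m) (H.zpow_mem hT n))).mp ?_
    exact ih _ (hk ▸ hlt) ((Gamma0 4).mul_mem hVT hg) rfl

lemma T_mem_slashStabilizer_jacobiThetaFnPowFour :
    T ∈ slashStabilizer (2 : ℤ) jacobiThetaFnPowFour := by
  ext τ
  rw [slash_action_eq'_iff, modular_T_smul]
  simp [jacobiThetaFnPowFour, jacobiThetaFn_add_one, add_comm]

lemma coe_V₄_mul_frickeFour_mul_T : (V₄ : GL (Fin 2) ℝ) * frickeFour * T = frickeFour := by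
  ext i j
  fin_cases i <;> fin_cases j <;> simp [frickeFour, Matrix.mul_apply, Fin.sum_univ_two]

lemma V₄_mem_slashStabilizer_jacobiThetaFnPowFour :
    V₄ ∈ slashStabilizer (2 : ℤ) jacobiThetaFnPowFour := by
  have hT : jacobiThetaFnPowFour ∣[(2 : ℤ)] (T : GL (Fin 2) ℝ) = jacobiThetaFnPowFour :=
    T_mem_slashStabilizer_jacobiThetaFnPowFour
  apply SlashAction.slash_left_injective (α := ℍ → ℂ) (2 : ℤ) (frickeFour * T)
  calc (jacobiThetaFnPowFour ∣[(2 : ℤ)] (V₄ : GL (Fin 2) ℝ)) ∣[(2 : ℤ)] (frickeFour * T)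
      = jacobiThetaFnPowFour ∣[(2 : ℤ)] frickeFour := by
        rw [← SlashAction.slash_mul, ← mul_assoc, coe_V₄_mul_frickeFour_mul_T]
    _ = jacobiThetaFnPowFour ∣[(2 : ℤ)] (frickeFour * T) := by
        rw [SlashAction.slash_mul, jacobiThetaFnPowFour_slash_frickeFour, SlashAction.neg_slash, hT]

/-- θ⁴ is a modular form of weight 2 for Γ₀(4): for [[a,b],[c,d]] ∈ SL(2,ℤ)
with 4 ∣ c and z in the upper half-plane, θ((az+b)/(cz+d))⁴ = (cz+d)² θ(z)⁴. -/
theorem jacobiTheta_pow_four_weight_two_gamma0_four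
    (γ : Matrix.SpecialLinearGroup (Fin 2) ℤ) (hγ : (4 : ℤ) ∣ γ 1 0)
    (z : ℂ) (hz : 0 < z.im) :
    (jacobiThetaFn ((((γ 0 0 : ℤ) : ℂ) * z + ((γ 0 1 : ℤ) : ℂ)) /
        (((γ 1 0 : ℤ) : ℂ) * z + ((γ 1 1 : ℤ) : ℂ)))) ^ 4
      = (((γ 1 0 : ℤ) : ℂ) * z + ((γ 1 1 : ℤ) : ℂ)) ^ 2 * (jacobiThetaFn z) ^ 4 := by
  have hmem : γ ∈ slashStabilizer (2 : ℤ) jacobiThetaFnPowFour :=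
    Gamma0_four_le_of_mem (neg_one_mem_slashStabilizer even_two _)
      T_mem_slashStabilizer_jacobiThetaFnPowFour V₄_mem_slashStabilizer_jacobiThetaFnPowFour
      (Gamma0_mem.mpr ((ZMod.intCast_zmod_eq_zero_iff_dvd _ 4).mpr hγ))
  have h := (slash_action_eq'_iff 2 _ γ ⟨z, hz⟩).mp (congrFun hmem ⟨z, hz⟩)
  simp only [jacobiThetaFnPowFour, coe_specialLinearGroup_apply] at h
  simpa using h
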